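/- Let ψ₁, ψ₂ ∈ ℂ′, ε ∈ {i′, −i′}, and suppose the real number ρ := Re(2(ψ₂ψ̄₂ + ψ₁ψ̄₁)) is nonzero. Define N₁ := −(2/ρ)·ε·(ψ₁ψ₂ − ψ̄₁ψ̄₂), N₂ := (2/ρ)·ε·i′·(ψ₁ψ₂ + ψ̄₁ψ̄₂), N₃ := −(2/ρ)·(ψ₂ψ̄₂ − ψ₁ψ̄₁). Then N₁, N₂, N₃ have vanishing imaginary part (are real) and satisfy −N₁² + N₂² + N₃² = 1; that is, the normal Gauss map takes values in the de Sitter two-sphere {(x₁,x₂,x₃) ∈ ℝ³ : −x₁² + x₂² + x₃² = 1}. -/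

import Mathlib

noncomputable section

/-- Para-complex numbers modeled as the product ring ℝ × ℝ. -/
abbrev Cp : Type := ℝ × ℝ

/-- The para-complex unit i′ = (1, -1), satisfying i′² = 1. -/
def ip : Cp := (1, -1)

/-- Para-complex conjugation. -/
def pconj (z : Cp) : Cp := (z.2, z.1)

/-- Real part of a para-complex number. -/
def pRe (z : Cp) : ℝ := (z.1 + z.2) / 2

/-- Imaginary part of a para-complex number. -/
def pIm (z : Cp) : ℝ := (z.1 - z.2) / 2

/-- Embedding of ℝ into the para-complex numbers. -/
def oR (r : ℝ) : Cp := (r, r)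

/-- The exponential of the Banach algebra ℝ × ℝ (componentwise real exponential). -/
def pexp (z : Cp) : Cp := (Real.exp z.1, Real.exp z.2)

/-- The para-complex derivative ∂_z f = ½(∂ₓf + i′ ∂_y f). -/
def dz (f : Cp → Cp) (p : Cp) : Cp :=
  oR (1/2) * (fderiv ℝ f p (1, 0) + ip * fderiv ℝ f p (0, 1))

/-- The para-complex derivative ∂_z̄ f = ½(∂ₓf − i′ ∂_y f). -/
def dzbar (f : Cp → Cp) (p : Cp) : Cp :=
  oR (1/2) * (fderiv ℝ f p (1, 0) - ip * fderiv ℝ f p (0, 1))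

/-! Conjugation `pconj` is a ring automorphism of `ℂ′` fixing the reals `oR r` and negating
`ε = ±i′` and `i′`, and each `Nₖ` is fixed by it, hence real. With `A = ψ₁ψ₂`,
`-(A - Ā)² + (A + Ā)² = 4AĀ = 4 (ψ₁ψ̄₁)(ψ₂ψ̄₂)`, so `-N₁² + N₂² + N₃² = (2/ρ)² (ψ₂ψ̄₂ + ψ₁ψ̄₁)²`,
and `ψ₂ψ̄₂ + ψ₁ψ̄₁` is the real number `ρ/2`. -/

@[simp] lemma pconj_pconj (z : Cp) : pconj (pconj z) = z := rfl

@[simp] lemma pconj_add (z w : Cp) : pconj (z + w) = pconj z + pconj w := rfl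

@[simp] lemma pconj_sub (z w : Cp) : pconj (z - w) = pconj z - pconj w := rfl

@[simp] lemma pconj_neg (z : Cp) : pconj (-z) = -pconj z := rfl

@[simp] lemma pconj_mul (z w : Cp) : pconj (z * w) = pconj z * pconj w := rfl

@[simp] lemma pconj_oR (r : ℝ) : pconj (oR r) = oR r := rfl

@[simp] lemma pconj_ip : pconj ip = -ip := by
  ext <;> simp [pconj, ip]

lemma ip_sq : ip ^ 2 = 1 := by
  ext <;> simp [ip]

lemma oR_mul (r s : ℝ) : oR (r * s) = oR r * oR s := rfl

lemma oR_one : oR 1 = 1 := rfl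

lemma pIm_eq_zero_iff_pconj_eq_self (z : Cp) : pIm z = 0 ↔ pconj z = z := by
  rw [pIm, pconj, Prod.ext_iff, div_eq_zero_iff, sub_eq_zero]
  simp [eq_comm]

lemma eq_oR_pRe_of_pconj_eq_self {z : Cp} (h : pconj z = z) : z = oR (pRe z) := by
  obtain ⟨x, y⟩ := z
  obtain rfl : y = x := congrArg Prod.fst h
  ext <;> simp [oR, pRe]

lemma pRe_eq_fst_of_pconj_eq_self {z : Cp} (h : pconj z = z) : pRe z = z.1 := by
  conv_rhs => rw [eq_oR_pRe_of_pconj_eq_self h]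
  rfl

lemma pRe_two_mul (z : Cp) : pRe (2 * z) = 2 * pRe z := by
  simp only [pRe, Prod.fst_mul, Prod.fst_ofNat, Prod.snd_mul, Prod.snd_ofNat]
  ring

lemma pconj_mul_self_add_pconj_mul_self (z w : Cp) :
    pconj (z * pconj z + w * pconj w) = z * pconj z + w * pconj w := by
  simp [mul_comm]

lemma mul_mul_pconj_mul_pconj (ψ₁ ψ₂ : Cp) :
    ψ₁ * ψ₂ * (pconj ψ₁ * pconj ψ₂) = ψ₂ * pconj ψ₂ * (ψ₁ * pconj ψ₁) := by
  ring

lemma neg_sq_add_sq_add_sq_eq_sq {R : Type*} [CommRing R] {c ε ι A B P Q : R}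
    (hε : ε ^ 2 = 1) (hι : ι ^ 2 = 1) (hAB : A * B = P * Q) :
    -(-c * ε * (A - B)) ^ 2 + (c * ε * ι * (A + B)) ^ 2 + (-c * (P - Q)) ^ 2
      = (c * (P + Q)) ^ 2 := by
  linear_combination (c ^ 2 * (A + B) ^ 2 * ε ^ 2) * hι
    + (c ^ 2 * ((A + B) ^ 2 - (A - B) ^ 2)) * hε + 4 * c ^ 2 * hAB

/-- The normal Gauss map takes values in the de Sitter two-sphere
{(x₁,x₂,x₃) ∈ ℝ³ : −x₁² + x₂² + x₃² = 1}. -/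
theorem normal_gauss_map_de_sitter (ψ₁ ψ₂ ε : Cp) (hε : ε = ip ∨ ε = -ip)
    (ρ : ℝ) (hρdef : ρ = pRe (2 * (ψ₂ * pconj ψ₂ + ψ₁ * pconj ψ₁))) (hρ : ρ ≠ 0)
    (N₁ N₂ N₃ : Cp)
    (hN₁ : N₁ = -(oR (2 / ρ)) * ε * (ψ₁ * ψ₂ - pconj ψ₁ * pconj ψ₂))
    (hN₂ : N₂ = oR (2 / ρ) * ε * ip * (ψ₁ * ψ₂ + pconj ψ₁ * pconj ψ₂))
    (hN₃ : N₃ = -(oR (2 / ρ)) * (ψ₂ * pconj ψ₂ - ψ₁ * pconj ψ₁)) :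
    pIm N₁ = 0 ∧ pIm N₂ = 0 ∧ pIm N₃ = 0 ∧
    -N₁ ^ 2 + N₂ ^ 2 + N₃ ^ 2 = 1 ∧
    -(pRe N₁) ^ 2 + (pRe N₂) ^ 2 + (pRe N₃) ^ 2 = 1 := by
  have hε_conj : pconj ε = -ε := by rcases hε with rfl | rfl <;> simp
  have hε_sq : ε ^ 2 = 1 := by rcases hε with rfl | rfl <;> simp [ip_sq]
  have hN₁_real : pconj N₁ = N₁ := by
    rw [hN₁]
    simp only [neg_mul, pconj_neg, pconj_mul, pconj_oR, hε_conj, mul_neg, pconj_sub, pconj_pconj,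
      neg_neg]
    ring
  have hN₂_real : pconj N₂ = N₂ := by
    rw [hN₂]
    simp only [pconj_mul, pconj_oR, hε_conj, mul_neg, pconj_ip, neg_mul, neg_neg, pconj_add,
      pconj_pconj]
    ring
  have hN₃_real : pconj N₃ = N₃ := by rw [hN₃]; simp [mul_comm]
  have h_norm : ψ₂ * pconj ψ₂ + ψ₁ * pconj ψ₁ = oR (ρ / 2) := by
    rw [eq_oR_pRe_of_pconj_eq_self (pconj_mul_self_add_pconj_mul_self ψ₂ ψ₁), hρdef,
      pRe_two_mul, mul_div_cancel_left₀ _ two_ne_zero]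
  have h_scale : 2 / ρ * (ρ / 2) = 1 := by field_simp
  have h_sq : -N₁ ^ 2 + N₂ ^ 2 + N₃ ^ 2 = 1 := by
    rw [hN₁, hN₂, hN₃, neg_sq_add_sq_add_sq_eq_sq hε_sq ip_sq (mul_mul_pconj_mul_pconj ψ₁ ψ₂),
      h_norm, ← oR_mul, h_scale, oR_one, one_pow]
  refine ⟨(pIm_eq_zero_iff_pconj_eq_self N₁).2 hN₁_real,
    (pIm_eq_zero_iff_pconj_eq_self N₂).2 hN₂_real,
    (pIm_eq_zero_iff_pconj_eq_self N₃).2 hN₃_real, h_sq, ?_⟩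
  rw [pRe_eq_fst_of_pconj_eq_self hN₁_real, pRe_eq_fst_of_pconj_eq_self hN₂_real,
    pRe_eq_fst_of_pconj_eq_self hN₃_real]
  simpa using congrArg Prod.fst h_sq
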